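/- Over F_2, for all natural numbers m and r, F_{2^m · r}(x) = F_r(x)^{2^m} · x^{2^m - 1}. -/

import Mathlib

/-! The addition formula `F (m + n + 1) = F (m + 1) * F (n + 1) + F m * F n` at `n = m + 1` gives
`F (2 n) = F n * (F (n + 1) + F (n - 1)) = X * F n ^ 2` in characteristic two, since the cross
terms cancel. Iterating this doubling `m` times gives the claim. -/

noncomputable def fibPoly (R : Type*) [CommRing R] : ℕ → Polynomial R
  | 0 => 0
  | 1 => 1
  | n + 2 => Polynomial.X * fibPoly R (n + 1) + fibPoly R n

open Polynomial

section

variable (R : Type*) [CommRing R]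

@[simp]
lemma fibPoly_zero : fibPoly R 0 = 0 := rfl

@[simp]
lemma fibPoly_one : fibPoly R 1 = 1 := rfl

lemma fibPoly_add_two (n : ℕ) :
    fibPoly R (n + 2) = X * fibPoly R (n + 1) + fibPoly R n := rfl

lemma fibPoly_add (m n : ℕ) :
    fibPoly R (m + n + 1) = fibPoly R (m + 1) * fibPoly R (n + 1) + fibPoly R m * fibPoly R n := by
  induction n generalizing m with
  | zero => simp
  | succ n ih =>
    calc fibPoly R (m + (n + 1) + 1)
        = fibPoly R (m + 2) * fibPoly R (n + 1) + fibPoly R (m + 1) * fibPoly R n := by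
          rw [← ih (m + 1)]; ring_nf
      _ = fibPoly R (m + 1) * fibPoly R (n + 2) + fibPoly R m * fibPoly R (n + 1) := by
          rw [fibPoly_add_two, fibPoly_add_two]; ring

lemma fibPoly_two_mul [CharP R 2] (n : ℕ) : fibPoly R (2 * n) = X * fibPoly R n ^ 2 := by
  cases n with
  | zero => simp
  | succ s =>
    calc fibPoly R (2 * (s + 1))
        = fibPoly R (s + 1) * fibPoly R (s + 2) + fibPoly R s * fibPoly R (s + 1) := by
          rw [← fibPoly_add]; ring_nf
      _ = X * fibPoly R (s + 1) ^ 2 +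
            (fibPoly R s * fibPoly R (s + 1) + fibPoly R s * fibPoly R (s + 1)) := by
          rw [fibPoly_add_two]; ring
      _ = X * fibPoly R (s + 1) ^ 2 := by rw [CharTwo.add_self_eq_zero, add_zero]

end

theorem fibPoly_two_pow_mul (m r : ℕ) :
    fibPoly (ZMod 2) (2 ^ m * r) =
      (fibPoly (ZMod 2) r) ^ (2 ^ m) * Polynomial.X ^ (2 ^ m - 1) := by
  induction m with
  | zero => simp
  | succ m ih =>
    have hexp : 2 * 2 ^ m - 1 = 2 * (2 ^ m - 1) + 1 := by
      have := Nat.one_le_two_pow (n := m); omega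
    rw [pow_succ', mul_assoc, fibPoly_two_mul, ih, hexp, mul_pow, ← pow_mul, ← pow_mul]
    ring
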